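/- Let ⋆ ∈ 𝒫 and define a_⋆: A⟨X⟩ → A⟨X⟩ by a_⋆(1)=1, and for a word x₁…x_n, a_⋆(x₁…x_n) = Σ over compositions (i₁,…,i_k) of n of (−1)^k (x₁…x_{i₁}) ⋆ (x_{i₁+1}…x_{i₁+i₂}) ⋆ … ⋆ (x_{i₁+…+i_{k−1}+1}…x_n). Then a_⋆ satisfies the left antipode identity: Σ_{uv=w} a_⋆(u) ⋆ v = ε(w)·1 for every word w, where ε(w) = 1 if w is empty and 0 otherwise. -/

import Mathlib

open Finsupp Finset Filter

/-- A word `w` seen as an element of the free module `A⟨X⟩` (coefficient 1). -/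
noncomputable def delta (A : Type*) [CommRing A] {X : Type*} (w : List X) : List X →₀ A :=
  Finsupp.single w 1

/-- Left concatenation by a letter, as a linear map on `A⟨X⟩`. -/
noncomputable def lcons (A : Type*) [CommRing A] {X : Type*} (x : X) :
    (List X →₀ A) →ₗ[A] (List X →₀ A) :=
  Finsupp.lmapDomain A A (List.cons x)

/-- Cut a word into the pieces prescribed by a composition (list of block sizes). -/
def splitWord {X : Type*} : List ℕ → List X → List (List X)
  | [], _ => []
  | i :: c, w => w.take i :: splitWord c (w.drop i)

/-- Iterated `⋆`-product of a list of words (empty product = empty word). -/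
noncomputable def prodStar {A X : Type*} [CommRing A]
    (star : (List X →₀ A) →ₗ[A] (List X →₀ A) →ₗ[A] (List X →₀ A)) :
    List (List X) → (List X →₀ A)
  | [] => delta A []
  | u :: l => star (delta A u) (prodStar star l)

/-- The candidate antipode: `a_⋆(x₁…x_n) = Σ_(compositions (i₁,…,i_k) of n) (-1)^k
(x₁…x_(i₁)) ⋆ … ⋆ (x_(i₁+…+i_(k-1)+1)…x_n)`. -/
noncomputable def aStar {A X : Type*} [CommRing A]
    (star : (List X →₀ A) →ₗ[A] (List X →₀ A) →ₗ[A] (List X →₀ A)) (w : List X) :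
    List X →₀ A :=
  ∑ c : Composition w.length,
    ((-1 : A) ^ c.blocks.length) • prodStar star (splitWord c.blocks w)

/-!
Splitting off the first block of a composition gives the recursion
`a_⋆(w) = -Σ_{uv=w, u≠1} u ⋆ a_⋆(v)`. Substituting it into `Σ_{uv=w} a_⋆(u) ⋆ v` for `w ≠ 1`
and reassociating turns the sum into `w - Σ_{uv=w, u≠1} u ⋆ (Σ_{u'v'=v} a_⋆(u') ⋆ v')`, which is
`w - w = 0` by induction on the length of `w`. The associativity of `⋆` needed here follows from
the recursive rule for `⋆` and the associativity of the bracket, by induction on the total length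
of the three words.
-/

section Star

variable {A X : Type*} [CommRing A]

theorem delta_cons (a : X) (u : List X) : delta A (a :: u) = lcons A a (delta A u) :=
  Finsupp.mapDomain_single.symm

theorem single_eq_smul_delta (u : List X) (c : A) : Finsupp.single u c = c • delta A u := by
  rw [delta, Finsupp.smul_single, smul_eq_mul, mul_one]

theorem linearMap_ext_delta {M : Type*} [AddCommMonoid M] [Module A M]
    {f g : (List X →₀ A) →ₗ[A] M} (h : ∀ w, f (delta A w) = g (delta A w)) : f = g :=
  Finsupp.lhom_ext' fun w => LinearMap.ext_ring (h w)

theorem smul_lcons_eq_of_smul_delta_eq {s t : A} {e f : X}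
    (h : s • delta A [e] = t • delta A [f]) (p : List X →₀ A) :
    s • lcons A e p = t • lcons A f p := by
  simp only [← single_eq_smul_delta, Finsupp.single_eq_single_iff, List.cons.injEq,
    and_true] at h
  rcases h with ⟨rfl, rfl⟩ | ⟨rfl, rfl⟩ <;> simp

variable (star : (List X →₀ A) →ₗ[A] (List X →₀ A) →ₗ[A] (List X →₀ A))

theorem star_delta_nil_left (hunitl : ∀ w : List X, star (delta A []) (delta A w) = delta A w)
    (p : List X →₀ A) : star (delta A []) p = p :=
  LinearMap.congr_fun (linearMap_ext_delta (g := LinearMap.id) hunitl) p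

theorem star_delta_nil_right (hunitr : ∀ w : List X, star (delta A w) (delta A []) = delta A w)
    (p : List X →₀ A) : star p (delta A []) = p :=
  LinearMap.congr_fun
    (linearMap_ext_delta (f := star.flip (delta A [])) (g := LinearMap.id) hunitr) p

variable {brC : X → X → A} {brX : X → X → X}

theorem star_lcons_lcons (hrec : ∀ (a b : X) (u v : List X),
      star (delta A (a :: u)) (delta A (b :: v)) =
        lcons A a (star (delta A u) (delta A (b :: v)))
          + lcons A b (star (delta A (a :: u)) (delta A v))
          + brC a b • lcons A (brX a b) (star (delta A u) (delta A v)))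
    (a b : X) (p q : List X →₀ A) :
    star (lcons A a p) (lcons A b q) =
      lcons A a (star p (lcons A b q))
        + lcons A b (star (lcons A a p) q)
        + brC a b • lcons A (brX a b) (star p q) := by
  induction p using Finsupp.induction_linear with
  | zero => simp
  | add p p' hp hp' =>
    simp only [map_add, LinearMap.add_apply, hp, hp', smul_add]
    abel
  | single u c =>
    induction q using Finsupp.induction_linear with
    | zero => simp
    | add q q' hq hq' =>
      simp only [map_add, hq, hq', smul_add]
      abel
    | single v d =>
      simp only [single_eq_smul_delta, map_smul, LinearMap.smul_apply, ← delta_cons, hrec]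
      module

theorem star_assoc_delta
    (hunitl : ∀ w : List X, star (delta A []) (delta A w) = delta A w)
    (hunitr : ∀ w : List X, star (delta A w) (delta A []) = delta A w)
    (hrec : ∀ (a b : X) (u v : List X),
      star (delta A (a :: u)) (delta A (b :: v)) =
        lcons A a (star (delta A u) (delta A (b :: v)))
          + lcons A b (star (delta A (a :: u)) (delta A v))
          + brC a b • lcons A (brX a b) (star (delta A u) (delta A v)))
    (hassoc : ∀ a b c : X,
      (brC a b * brC (brX a b) c) • delta A [brX (brX a b) c]
        = (brC b c * brC a (brX b c)) • delta A [brX a (brX b c)]) :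
    ∀ u v w : List X,
      star (star (delta A u) (delta A v)) (delta A w)
        = star (delta A u) (star (delta A v) (delta A w))
  | [], v, w => by rw [hunitl, star_delta_nil_left star hunitl]
  | u, [], w => by rw [hunitr, hunitl]
  | u, v, [] => by rw [star_delta_nil_right star hunitr, hunitr]
  | a :: u, b :: v, c :: w => by
    have ih_u_bv_cw := star_assoc_delta hunitl hunitr hrec hassoc u (b :: v) (c :: w)
    have ih_au_v_cw := star_assoc_delta hunitl hunitr hrec hassoc (a :: u) v (c :: w)
    have ih_u_v_cw := star_assoc_delta hunitl hunitr hrec hassoc u v (c :: w)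
    have ih_au_bv_w := star_assoc_delta hunitl hunitr hrec hassoc (a :: u) (b :: v) w
    have ih_u_bv_w := star_assoc_delta hunitl hunitr hrec hassoc u (b :: v) w
    have ih_au_v_w := star_assoc_delta hunitl hunitr hrec hassoc (a :: u) v w
    have ih_u_v_w := star_assoc_delta hunitl hunitr hrec hassoc u v w
    have hcons := star_lcons_lcons star hrec
    have hbracket := smul_lcons_eq_of_smul_delta_eq (hassoc a b c)
    simp only [delta_cons] at ih_u_bv_cw ih_au_v_cw ih_u_v_cw ih_au_bv_w ih_u_bv_w ih_au_v_w ⊢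
    set U := delta A u
    set V := delta A v
    set W := delta A w
    -- the terms of the left side starting with `c` recombine into `c (au ⋆ (bv ⋆ w))`
    have hc : star (lcons A a U) (star (lcons A b V) W) =
        star (lcons A a (star U (lcons A b V))) W + star (lcons A b (star (lcons A a U) V)) W
          + brC a b • star (lcons A (brX a b) (star U V)) W := by
      rw [← ih_au_bv_w, hcons a b U V]
      simp only [map_add, map_smul, LinearMap.add_apply, LinearMap.smul_apply]
    rw [hcons a b U V]
    simp only [map_add, map_smul, LinearMap.add_apply, LinearMap.smul_apply]
    rw [hcons a c _ W, hcons b c _ W, hcons (brX a b) c _ W, ih_u_bv_cw, ih_au_v_cw, ih_u_v_cw,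
      ih_u_bv_w, ih_au_v_w, ih_u_v_w, hcons b c V W]
    simp only [map_add, map_smul]
    rw [hcons a b U _, hcons a c U _, hcons a (brX b c) U _, hc]
    simp only [map_add, map_smul, smul_add, smul_smul, hbracket]
    module
termination_by u v w => u.length + v.length + w.length

theorem star_assoc_delta_left_right
    (hassoc : ∀ u v w : List X,
      star (star (delta A u) (delta A v)) (delta A w)
        = star (delta A u) (star (delta A v) (delta A w)))
    (u : List X) (p : List X →₀ A) (w : List X) :
    star (star (delta A u) p) (delta A w) = star (delta A u) (star p (delta A w)) :=
  LinearMap.congr_fun (linearMap_ext_delta (f := star.flip (delta A w) ∘ₗ star (delta A u))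
    (g := star (delta A u) ∘ₗ star.flip (delta A w)) (hassoc u · w)) p

end Star

theorem Composition.sum_succ_eq_sum_first_block {M : Type*} [AddCommMonoid M] (n : ℕ)
    (f : List ℕ → M) :
    ∑ c : Composition (n + 1), f c.blocks =
      ∑ i ∈ range (n + 1), ∑ c : Composition (n - i), f ((i + 1) :: c.blocks) := by
  rw [Finset.sum_sigma']
  symm
  refine Finset.sum_bij (fun x hx => ⟨(x.1 + 1) :: x.2.blocks, ?_, ?_⟩)
    (fun _ _ => Finset.mem_univ _) ?_ ?_ (fun _ _ => rfl)
  · simp only [List.mem_cons, forall_eq_or_imp]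
    exact ⟨x.1.succ_pos, fun _ => x.2.blocks_pos⟩
  · have := Finset.mem_range.1 (Finset.mem_sigma.1 hx).1
    rw [List.sum_cons, x.2.blocks_sum]
    omega
  · rintro ⟨i, c⟩ _ ⟨i', c'⟩ _ h
    simp only [Composition.mk.injEq, List.cons.injEq, Nat.add_right_cancel_iff] at h
    obtain ⟨rfl, h⟩ := h
    rw [Composition.ext h]
  · intro c _
    obtain ⟨k, l, hc⟩ := List.exists_cons_of_ne_nil (c.blocks_eq_nil.not.2 n.succ_ne_zero)
    have hk : 0 < k := c.blocks_pos (hc ▸ List.mem_cons_self)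
    have hsum : k + l.sum = n + 1 := by rw [← List.sum_cons, ← hc, c.blocks_sum]
    refine ⟨⟨k - 1, (⟨l, fun hi => c.blocks_pos (hc ▸ List.mem_cons_of_mem _ hi),
      by omega⟩ : Composition (n - (k - 1)))⟩,
      Finset.mem_sigma.2 ⟨Finset.mem_range.2 (show k - 1 < n + 1 by omega), Finset.mem_univ _⟩,
      Composition.ext ?_⟩
    change (k - 1 + 1) :: l = c.blocks
    rw [hc, Nat.sub_add_cancel hk]

section Antipode

variable {A X : Type*} [CommRing A]
  (star : (List X →₀ A) →ₗ[A] (List X →₀ A) →ₗ[A] (List X →₀ A))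

theorem aStar_nil : aStar star ([] : List X) = delta A [] := by
  have hblocks (c : Composition 0) : c.blocks = [] := c.blocks_eq_nil.2 rfl
  simp [aStar, hblocks, splitWord, prodStar, composition_card]

theorem aStar_cons (x : X) (t : List X) :
    aStar star (x :: t) =
      -∑ j ∈ range (t.length + 1), star (delta A (x :: t.take j)) (aStar star (t.drop j)) := by
  refine (Composition.sum_succ_eq_sum_first_block t.length
    fun l => (-1 : A) ^ l.length • prodStar star (splitWord l (x :: t))).trans ?_
  rw [← Finset.sum_neg_distrib]
  refine Finset.sum_congr rfl fun j _ => ?_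
  rw [aStar, List.length_drop, map_sum, ← Finset.sum_neg_distrib]
  refine Finset.sum_congr rfl fun c _ => ?_
  rw [map_smul, List.length_cons, pow_succ, mul_neg_one, neg_smul]
  rfl

theorem sum_star_take_drop_of_right_recursion
    (hunitl : ∀ w : List X, star (delta A []) (delta A w) = delta A w)
    (hunitr : ∀ w : List X, star (delta A w) (delta A []) = delta A w)
    (hassoc : ∀ (u : List X) (p : List X →₀ A) (w : List X),
      star (star (delta A u) p) (delta A w) = star (delta A u) (star p (delta A w)))
    (a : List X → List X →₀ A) (ha_nil : a [] = delta A [])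
    (ha_cons : ∀ (x : X) (t : List X),
      a (x :: t) = -∑ j ∈ range (t.length + 1), star (delta A (x :: t.take j)) (a (t.drop j))) :
    ∀ w : List X,
      (∑ i ∈ range (w.length + 1), star (a (w.take i)) (delta A (w.drop i)))
        = if w = [] then delta A [] else 0
  | [] => by simp [ha_nil, hunitl]
  | x :: t => by
    have ih (j : ℕ) :=
      sum_star_take_drop_of_right_recursion hunitl hunitr hassoc a ha_nil ha_cons (t.drop j)
    have hexpand (i : ℕ) (hi : i ∈ range (t.length + 1)) :
        star (a (x :: t.take i)) (delta A (t.drop i)) =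
          -∑ j ∈ range (i + 1), star (delta A (x :: t.take j))
            (star (a ((t.drop j).take (i - j))) (delta A ((t.drop j).drop (i - j)))) := by
      have hi : i ≤ t.length := Nat.lt_succ_iff.1 (Finset.mem_range.1 hi)
      rw [ha_cons, List.length_take_of_le hi, map_neg, LinearMap.neg_apply, map_sum,
        LinearMap.sum_apply]
      refine congrArg Neg.neg (Finset.sum_congr rfl fun j hj => ?_)
      have hj : j ≤ i := Nat.lt_succ_iff.1 (Finset.mem_range.1 hj)
      rw [List.take_take, min_eq_left hj, List.drop_take, List.drop_drop,
        Nat.add_sub_cancel' hj, hassoc]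
    have hvanish (j : ℕ) (hj : j ∈ range t.length) :
        star (delta A (x :: t.take j)) (∑ k ∈ range (t.length + 1 - j),
          star (a ((t.drop j).take k)) (delta A ((t.drop j).drop k))) = 0 := by
      have hj : j < t.length := Finset.mem_range.1 hj
      rw [Nat.sub_add_comm hj.le, ← List.length_drop, ih j,
        if_neg (List.drop_eq_nil_iff.not.2 hj.not_ge), map_zero]
    rw [if_neg (List.cons_ne_nil x t)]
    calc (∑ i ∈ range (t.length + 2), star (a ((x :: t).take i)) (delta A ((x :: t).drop i)))
        = delta A (x :: t)
            + ∑ i ∈ range (t.length + 1), star (a (x :: t.take i)) (delta A (t.drop i)) := by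
          rw [Finset.sum_range_succ', add_comm]
          simp [ha_nil, hunitl]
      _ = delta A (x :: t) - ∑ i ∈ range (t.length + 1), ∑ j ∈ range (i + 1),
            star (delta A (x :: t.take j))
              (star (a ((t.drop j).take (i - j))) (delta A ((t.drop j).drop (i - j)))) := by
          rw [Finset.sum_congr rfl hexpand, Finset.sum_neg_distrib, sub_eq_add_neg]
      _ = delta A (x :: t) - ∑ j ∈ range (t.length + 1), star (delta A (x :: t.take j))
            (∑ k ∈ range (t.length + 1 - j),
              star (a ((t.drop j).take k)) (delta A ((t.drop j).drop k))) := by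
          rw [Finset.sum_range_diag_flip _ fun j k => star (delta A (x :: t.take j))
            (star (a ((t.drop j).take k)) (delta A ((t.drop j).drop k)))]
          simp only [map_sum]
      _ = 0 := by
          rw [Finset.sum_range_succ, Finset.sum_eq_zero hvanish, zero_add,
            Nat.add_sub_cancel_left]
          simp [ha_nil, hunitl, hunitr]
termination_by w => w.length
decreasing_by simp only [List.length_drop, List.length_cons]; omega

end Antipode

theorem stmt10 {A X : Type*} [CommRing A]
    (star : (List X →₀ A) →ₗ[A] (List X →₀ A) →ₗ[A] (List X →₀ A))
    (brC : X → X → A) (brX : X → X → X)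
    (hunitl : ∀ w : List X, star (delta A []) (delta A w) = delta A w)
    (hunitr : ∀ w : List X, star (delta A w) (delta A []) = delta A w)
    (hrec : ∀ (a b : X) (u v : List X),
      star (delta A (a :: u)) (delta A (b :: v)) =
        lcons A a (star (delta A u) (delta A (b :: v)))
          + lcons A b (star (delta A (a :: u)) (delta A v))
          + brC a b • lcons A (brX a b) (star (delta A u) (delta A v)))
    (hassoc : ∀ a b c : X,
      (brC a b * brC (brX a b) c) • delta A [brX (brX a b) c]
        = (brC b c * brC a (brX b c)) • delta A [brX a (brX b c)]) :
    ∀ w : List X,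
      (∑ i ∈ Finset.range (w.length + 1),
          star (aStar star (w.take i)) (delta A (w.drop i)))
        = (match w with | [] => delta A ([] : List X) | _ => 0) :=
  fun w => (sum_star_take_drop_of_right_recursion star hunitl hunitr
    (star_assoc_delta_left_right star (star_assoc_delta star hunitl hunitr hrec hassoc))
    (aStar star) (aStar_nil star) (aStar_cons star) w).trans (by cases w <;> rfl)
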